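/- Let Ω = (0, L) × (0, 1) ⊂ ℝ² with L > 0, e_g = (0, −1), u_s ∈ ℝ, ν ≥ 0, κ > 0, and let y denote the second coordinate function. Let u : cl(Ω) × [0, T] → ℝ² be continuously differentiable with div u = 0 in Ω and u·n = 0 on ∂Ω, let ω, p̄ : cl(Ω) × [0, T] → ℝ be continuously differentiable in space, and let φ : cl(Ω) × [0, T] → ℝ be C¹ in time and C² in space. Assume: (i) the momentum equation ∂u/∂t + ω × u + ∇p̄ = −ν ∇×ω + φ e_g holds in Ω, (ii) the transport equation ∂φ/∂t + (u + u_s e_g)·∇φ = κ Δφ holds in Ω, and (iii) the boundary conditions (−u_s φ e_g + κ ∇φ)·n = 0 on Γ₁ ∪ Γ₂ ∪ Γ₄ and ∇φ·n = 0 on Γ₃ hold. Then the total energy budget holds for each t: ∫_Ω [ u·∂u/∂t + (∂φ/∂t) y ] dx = − ν ∫_Ω (∇×ω)·u dx − u_s ∫_Ω φ dx + κ ∫_Ω ∇φ·e_g dx; i.e. d/dt(K + E_p) = −ε_v − ε_s with ε_v = ν ∫_Ω (∇×ω)·u dx and ε_s = u_s ∫_Ω φ dx − κ ∫_Ω ∇φ·e_g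 dx. -/

import Mathlib

open MeasureTheory Set

/-- Partial derivative in the first spatial direction. -/
noncomputable def d1 (f : ℝ × ℝ → ℝ) (x : ℝ × ℝ) : ℝ := fderiv ℝ f x ((1 : ℝ), (0 : ℝ))

/-- Partial derivative in the second spatial direction. -/
noncomputable def d2 (f : ℝ × ℝ → ℝ) (x : ℝ × ℝ) : ℝ := fderiv ℝ f x ((0 : ℝ), (1 : ℝ))

/-- Gradient of a scalar field on `ℝ²`. -/
noncomputable def grad (f : ℝ × ℝ → ℝ) (x : ℝ × ℝ) : ℝ × ℝ := (d1 f x, d2 f x)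

/-- Divergence of a vector field on `ℝ²`. -/
noncomputable def div2 (w : ℝ × ℝ → ℝ × ℝ) (x : ℝ × ℝ) : ℝ :=
  d1 (fun y => (w y).1) x + d2 (fun y => (w y).2) x

/-- Laplacian of a scalar field on `ℝ²`. -/
noncomputable def lap (f : ℝ × ℝ → ℝ) (x : ℝ × ℝ) : ℝ := d1 (d1 f) x + d2 (d2 f) x

/-- Dot product on `ℝ²`. -/
def dot (a b : ℝ × ℝ) : ℝ := a.1 * b.1 + a.2 * b.2

/-- Unit vector in the direction of gravity. -/
noncomputable def eg : ℝ × ℝ := ((0 : ℝ), (-1 : ℝ))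

/-! At a fixed time, substituting the momentum and transport equations into `u·∂ₜu + y ∂ₜφ`,
and using `div u = 0` and `u·(ω × u) = 0`, leaves the three dissipation densities plus the
divergence of the energy flux `G = y F − (p̄ + φ y) u`, where `F = −u_s φ e_g + κ ∇φ` is the
particle flux. The normal component of `G` vanishes on the whole boundary: `u·n = 0` on every
wall, `F·n = 0` on the top and lateral walls, and the height `y` vanishes on the bottom. By the
divergence theorem on the rectangle (Fubini and the fundamental theorem of calculus on each
segment), `∫_Ω div G = 0`. -/

section PartialDerivatives

variable {f g : ℝ × ℝ → ℝ} {x : ℝ × ℝ}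

lemma d1_const (c : ℝ) : d1 (fun _ => c) x = 0 := by simp [d1]

lemma d2_const (c : ℝ) : d2 (fun _ => c) x = 0 := by simp [d2]

lemma d1_snd : d1 (fun y : ℝ × ℝ => y.2) x = 0 := by simp [d1, fderiv_snd]

lemma d2_snd : d2 (fun y : ℝ × ℝ => y.2) x = 1 := by simp [d2, fderiv_snd]

lemma d1_add (hf : DifferentiableAt ℝ f x) (hg : DifferentiableAt ℝ g x) :
    d1 (fun y => f y + g y) x = d1 f x + d1 g x := by
  simp [d1, fderiv_fun_add hf hg]

lemma d2_add (hf : DifferentiableAt ℝ f x) (hg : DifferentiableAt ℝ g x) :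
    d2 (fun y => f y + g y) x = d2 f x + d2 g x := by
  simp [d2, fderiv_fun_add hf hg]

lemma d1_sub (hf : DifferentiableAt ℝ f x) (hg : DifferentiableAt ℝ g x) :
    d1 (fun y => f y - g y) x = d1 f x - d1 g x := by
  simp [d1, fderiv_fun_sub hf hg]

lemma d2_sub (hf : DifferentiableAt ℝ f x) (hg : DifferentiableAt ℝ g x) :
    d2 (fun y => f y - g y) x = d2 f x - d2 g x := by
  simp [d2, fderiv_fun_sub hf hg]

lemma d1_mul (hf : DifferentiableAt ℝ f x) (hg : DifferentiableAt ℝ g x) :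
    d1 (fun y => f y * g y) x = d1 f x * g x + f x * d1 g x := by
  simp [d1, fderiv_fun_mul hf hg]
  ring

lemma d2_mul (hf : DifferentiableAt ℝ f x) (hg : DifferentiableAt ℝ g x) :
    d2 (fun y => f y * g y) x = d2 f x * g x + f x * d2 g x := by
  simp [d2, fderiv_fun_mul hf hg]
  ring

lemma hasDerivAt_d1 {a b : ℝ} (hf : DifferentiableAt ℝ f (a, b)) :
    HasDerivAt (fun s => f (s, b)) (d1 f (a, b)) a :=
  hf.hasFDerivAt.comp_hasDerivAt a ((hasDerivAt_id a).prodMk (hasDerivAt_const a b))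

lemma hasDerivAt_d2 {a b : ℝ} (hf : DifferentiableAt ℝ f (a, b)) :
    HasDerivAt (fun s => f (a, s)) (d2 f (a, b)) b :=
  hf.hasFDerivAt.comp_hasDerivAt b ((hasDerivAt_const b a).prodMk (hasDerivAt_id b))

variable {n m : WithTop ℕ∞}

lemma ContDiff.continuous_d1 (hf : ContDiff ℝ n f) (hn : n ≠ 0) : Continuous (d1 f) :=
  (hf.continuous_fderiv hn).clm_apply continuous_const

lemma ContDiff.continuous_d2 (hf : ContDiff ℝ n f) (hn : n ≠ 0) : Continuous (d2 f) :=
  (hf.continuous_fderiv hn).clm_apply continuous_const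

lemma contDiff_grad (hf : ContDiff ℝ n f) (hmn : m + 1 ≤ n) : ContDiff ℝ m (grad f) :=
  ((hf.fderiv_right hmn).clm_apply contDiff_const).prodMk
    ((hf.fderiv_right hmn).clm_apply contDiff_const)

lemma ContDiff.continuous_div2 {w : ℝ × ℝ → ℝ × ℝ} (hw : ContDiff ℝ n w) (hn : n ≠ 0) :
    Continuous (div2 w) :=
  (hw.fst.continuous_d1 hn).add (hw.snd.continuous_d2 hn)

end PartialDerivatives

section Rectangle

variable {a b c d : ℝ} {f : ℝ × ℝ → ℝ}

lemma Continuous.integrableOn_Ioo_prod_Ioo {E : Type*} [NormedAddCommGroup E] {g : ℝ × ℝ → E}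
    (hg : Continuous g) : IntegrableOn g (Ioo a b ×ˢ Ioo c d) :=
  (hg.continuousOn.integrableOn_compact (isCompact_Icc.prod isCompact_Icc)).mono_set
    (prod_mono Ioo_subset_Icc_self Ioo_subset_Icc_self)

lemma integral_Ioo_d1 (hf : ContDiff ℝ 1 f) (hab : a ≤ b) (y : ℝ) :
    ∫ s in Ioo a b, d1 f (s, y) = f (b, y) - f (a, y) := by
  rw [← integral_Ioc_eq_integral_Ioo, ← intervalIntegral.integral_of_le hab]
  exact intervalIntegral.integral_eq_sub_of_hasDerivAt
    (fun s _ => hasDerivAt_d1 (hf.differentiable one_ne_zero _))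
    (((hf.continuous_d1 one_ne_zero).comp (by fun_prop)).intervalIntegrable a b)

lemma integral_Ioo_d2 (hf : ContDiff ℝ 1 f) (hcd : c ≤ d) (x : ℝ) :
    ∫ s in Ioo c d, d2 f (x, s) = f (x, d) - f (x, c) := by
  rw [← integral_Ioc_eq_integral_Ioo, ← intervalIntegral.integral_of_le hcd]
  exact intervalIntegral.integral_eq_sub_of_hasDerivAt
    (fun s _ => hasDerivAt_d2 (hf.differentiable one_ne_zero _))
    (((hf.continuous_d2 one_ne_zero).comp (by fun_prop)).intervalIntegrable c d)

lemma setIntegral_d1 (hf : ContDiff ℝ 1 f) (hab : a ≤ b) :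
    ∫ x in Ioo a b ×ˢ Ioo c d, d1 f x = ∫ s in Ioo c d, (f (b, s) - f (a, s)) := by
  have hint : IntegrableOn (d1 f) (Ioo a b ×ˢ Ioo c d) :=
    (hf.continuous_d1 one_ne_zero).integrableOn_Ioo_prod_Ioo
  unfold IntegrableOn at hint
  rw [Measure.volume_eq_prod, ← Measure.prod_restrict] at hint ⊢
  rw [integral_prod_symm _ hint]
  exact setIntegral_congr_fun measurableSet_Ioo fun s _ => integral_Ioo_d1 hf hab s

lemma setIntegral_d2 (hf : ContDiff ℝ 1 f) (hcd : c ≤ d) :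
    ∫ x in Ioo a b ×ˢ Ioo c d, d2 f x = ∫ s in Ioo a b, (f (s, d) - f (s, c)) := by
  have hint : IntegrableOn (d2 f) (Ioo a b ×ˢ Ioo c d) :=
    (hf.continuous_d2 one_ne_zero).integrableOn_Ioo_prod_Ioo
  rw [Measure.volume_eq_prod] at hint ⊢
  rw [setIntegral_prod _ hint]
  exact setIntegral_congr_fun measurableSet_Ioo fun s _ => integral_Ioo_d2 hf hcd s

theorem setIntegral_div2_eq_zero {w : ℝ × ℝ → ℝ × ℝ} (hw : ContDiff ℝ 1 w) (hab : a ≤ b)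
    (hcd : c ≤ d) (ha : ∀ y ∈ Ioo c d, dot (w (a, y)) (-1, 0) = 0)
    (hb : ∀ y ∈ Ioo c d, dot (w (b, y)) (1, 0) = 0)
    (hc : ∀ x ∈ Ioo a b, dot (w (x, c)) (0, -1) = 0)
    (hd : ∀ x ∈ Ioo a b, dot (w (x, d)) (0, 1) = 0) :
    ∫ x in Ioo a b ×ˢ Ioo c d, div2 w x = 0 := by
  simp only [dot, mul_zero, mul_one, mul_neg, add_zero, zero_add, neg_eq_zero] at ha hb hc hd
  unfold div2
  rw [integral_add (hw.fst.continuous_d1 one_ne_zero).integrableOn_Ioo_prod_Ioo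
      (hw.snd.continuous_d2 one_ne_zero).integrableOn_Ioo_prod_Ioo,
    setIntegral_d1 hw.fst hab, setIntegral_d2 hw.snd hcd,
    setIntegral_eq_zero_of_forall_eq_zero fun y hy => by simp [ha y hy, hb y hy],
    setIntegral_eq_zero_of_forall_eq_zero fun x hx => by simp [hc x hx, hd x hx], add_zero]

end Rectangle

@[fun_prop]
lemma Continuous.dot {X : Type*} [TopologicalSpace X] {f g : X → ℝ × ℝ} (hf : Continuous f)
    (hg : Continuous g) : Continuous fun x => dot (f x) (g x) := by
  unfold _root_.dot
  fun_prop

noncomputable def particleFlux (u_s κ : ℝ) (φ : ℝ × ℝ → ℝ) (x : ℝ × ℝ) : ℝ × ℝ :=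
  (-(u_s * φ x)) • eg + κ • grad φ x

noncomputable def energyFlux (u_s κ : ℝ) (u : ℝ × ℝ → ℝ × ℝ) (p φ : ℝ × ℝ → ℝ) (x : ℝ × ℝ) :
    ℝ × ℝ :=
  x.2 • particleFlux u_s κ φ x - (p x + φ x * x.2) • u x

section EnergyFlux

variable {u_s κ : ℝ} {u : ℝ × ℝ → ℝ × ℝ} {p φ : ℝ × ℝ → ℝ}

lemma contDiff_energyFlux {n : WithTop ℕ∞} (hu : ContDiff ℝ n u) (hp : ContDiff ℝ n p)
    (hφ : ContDiff ℝ n φ) (hgφ : ContDiff ℝ n (grad φ)) :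
    ContDiff ℝ n (energyFlux u_s κ u p φ) := by
  unfold energyFlux particleFlux
  fun_prop

lemma dot_energyFlux_eq_zero {x n : ℝ × ℝ} (hu : dot (u x) n = 0)
    (hF : dot (particleFlux u_s κ φ x) n = 0) : dot (energyFlux u_s κ u p φ x) n = 0 := by
  simp only [energyFlux, dot, Prod.fst_sub, Prod.snd_sub, Prod.smul_fst, Prod.smul_snd,
    smul_eq_mul] at hu hF ⊢
  linear_combination x.2 * hF - (p x + φ x * x.2) * hu

lemma dot_energyFlux_eq_zero_of_snd_eq_zero {x n : ℝ × ℝ} (hu : dot (u x) n = 0) (hx : x.2 = 0) :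
    dot (energyFlux u_s κ u p φ x) n = 0 := by
  simp only [energyFlux, dot, Prod.fst_sub, Prod.snd_sub, Prod.smul_fst, Prod.smul_snd,
    smul_eq_mul] at hu ⊢
  rw [hx]
  linear_combination -(p x + φ x * 0) * hu

variable {x : ℝ × ℝ}

lemma div2_energyFlux (hu : DifferentiableAt ℝ u x) (hp : DifferentiableAt ℝ p x)
    (hφ : DifferentiableAt ℝ φ x) (hgφ : DifferentiableAt ℝ (grad φ) x) :
    div2 (energyFlux u_s κ u p φ) x
      = x.2 * (κ * lap φ x + u_s * d2 φ x) + (u_s * φ x + κ * d2 φ x)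
        - (dot (grad p x) (u x) + x.2 * dot (grad φ x) (u x) + φ x * (u x).2)
        - (p x + φ x * x.2) * div2 u x := by
  have h1 : DifferentiableAt ℝ (d1 φ) x := hgφ.fst
  have h2 : DifferentiableAt ℝ (d2 φ) x := hgφ.snd
  simp only [div2, energyFlux, particleFlux, grad, eg, Prod.fst_sub, Prod.snd_sub,
    Prod.smul_fst, Prod.smul_snd, Prod.fst_add, Prod.snd_add, smul_eq_mul, mul_zero, zero_add,
    mul_neg, mul_one, neg_neg]
  simp (disch := fun_prop) only [d1_sub, d1_mul, d1_add, d1_const, d1_snd, d2_sub, d2_mul, d2_add,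
    d2_const, d2_snd]
  simp only [lap, dot]
  ring

theorem energy_density_eq {ω : ℝ × ℝ → ℝ} {ν : ℝ} {du : ℝ × ℝ} {dφ : ℝ}
    (hu : DifferentiableAt ℝ u x) (hp : DifferentiableAt ℝ p x) (hφ : DifferentiableAt ℝ φ x)
    (hgφ : DifferentiableAt ℝ (grad φ) x) (hdiv : div2 u x = 0)
    (hmom : du + ω x • (-(u x).2, (u x).1) + grad p x
      = (-ν) • (d2 ω x, -(d1 ω x)) + φ x • eg)
    (htransport : dφ + dot (u x + u_s • eg) (grad φ x) = κ * lap φ x) :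
    dot (u x) du + dφ * x.2
      = -(ν * dot (d2 ω x, -(d1 ω x)) (u x)) - u_s * φ x + κ * dot (grad φ x) eg
        + div2 (energyFlux u_s κ u p φ) x := by
  have hmom₁ := congrArg Prod.fst hmom
  have hmom₂ := congrArg Prod.snd hmom
  rw [div2_energyFlux hu hp hφ hgφ, hdiv]
  simp only [dot, grad, eg, Prod.fst_add, Prod.snd_add, Prod.smul_fst, Prod.smul_snd,
    smul_eq_mul] at hmom₁ hmom₂ htransport ⊢
  linear_combination (u x).1 * hmom₁ + (u x).2 * hmom₂ + x.2 * htransport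

end EnergyFlux

theorem total_energy_budget_general
    (L T u_s ν κ : ℝ) (hL : 0 < L)
    (u : ℝ × ℝ → ℝ → ℝ × ℝ) (ω pbar φ : ℝ × ℝ → ℝ → ℝ)
    (hu : ContDiff ℝ 1 (fun p : (ℝ × ℝ) × ℝ => u p.1 p.2))
    (hω : ∀ t ∈ Icc (0 : ℝ) T, ContDiff ℝ 1 (fun x => ω x t))
    (hp : ∀ t ∈ Icc (0 : ℝ) T, ContDiff ℝ 1 (fun x => pbar x t))
    (hφspace : ∀ t ∈ Icc (0 : ℝ) T, ContDiff ℝ 2 (fun x => φ x t))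
    (hdiv : ∀ t ∈ Icc (0 : ℝ) T, ∀ x ∈ Ioo 0 L ×ˢ Ioo (0 : ℝ) 1, div2 (fun y => u y t) x = 0)
    (hbottom : ∀ t ∈ Icc (0 : ℝ) T, ∀ x ∈ Icc 0 L, (u (x, 0) t).2 = 0)
    (htop : ∀ t ∈ Icc (0 : ℝ) T, ∀ x ∈ Icc 0 L, (u (x, 1) t).2 = 0)
    (hleft : ∀ t ∈ Icc (0 : ℝ) T, ∀ y ∈ Icc (0 : ℝ) 1, (u (0, y) t).1 = 0)
    (hright : ∀ t ∈ Icc (0 : ℝ) T, ∀ y ∈ Icc (0 : ℝ) 1, (u (L, y) t).1 = 0)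
    (hmom : ∀ t ∈ Icc (0 : ℝ) T, ∀ x ∈ Ioo 0 L ×ˢ Ioo (0 : ℝ) 1,
      deriv (fun s => u x s) t + (ω x t) • (-(u x t).2, (u x t).1)
          + grad (fun y => pbar y t) x
        = (-ν) • (d2 (fun y => ω y t) x, -(d1 (fun y => ω y t) x)) + (φ x t) • eg)
    (htransport : ∀ t ∈ Icc (0 : ℝ) T, ∀ x ∈ Ioo 0 L ×ˢ Ioo (0 : ℝ) 1,
      deriv (fun s => φ x s) t + dot (u x t + u_s • eg) (grad (fun y => φ y t) x)
        = κ * lap (fun y => φ y t) x)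
    (hfluxtop : ∀ t ∈ Icc (0 : ℝ) T, ∀ x ∈ Icc 0 L,
      dot ((-(u_s * φ (x, 1) t)) • eg + κ • grad (fun y => φ y t) (x, 1)) ((0 : ℝ), 1) = 0)
    (hfluxleft : ∀ t ∈ Icc (0 : ℝ) T, ∀ y ∈ Icc (0 : ℝ) 1,
      dot ((-(u_s * φ (0, y) t)) • eg + κ • grad (fun z => φ z t) (0, y)) ((-1 : ℝ), 0) = 0)
    (hfluxright : ∀ t ∈ Icc (0 : ℝ) T, ∀ y ∈ Icc (0 : ℝ) 1,
      dot ((-(u_s * φ (L, y) t)) • eg + κ • grad (fun z => φ z t) (L, y)) ((1 : ℝ), 0) = 0) :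
    ∀ t ∈ Icc (0 : ℝ) T,
      (∫ x in Ioo 0 L ×ˢ Ioo (0 : ℝ) 1,
          (dot (u x t) (deriv (fun s => u x s) t) + (deriv (fun s => φ x s) t) * x.2))
        = -(ν * ∫ x in Ioo 0 L ×ˢ Ioo (0 : ℝ) 1,
              dot (d2 (fun y => ω y t) x, -(d1 (fun y => ω y t) x)) (u x t))
          - u_s * (∫ x in Ioo 0 L ×ˢ Ioo (0 : ℝ) 1, φ x t)
          + κ * ∫ x in Ioo 0 L ×ˢ Ioo (0 : ℝ) 1, dot (grad (fun y => φ y t) x) eg := by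
  intro t ht
  have hU : ContDiff ℝ 1 (fun x => u x t) := hu.comp (contDiff_id.prodMk contDiff_const)
  have hΦ := hφspace t ht
  have hgradΦ : ContDiff ℝ 1 (grad fun x => φ x t) := contDiff_grad hΦ (by norm_num)
  have hG : ContDiff ℝ 1
      (energyFlux u_s κ (fun y => u y t) (fun y => pbar y t) (fun y => φ y t)) :=
    contDiff_energyFlux hU (hp t ht) (hΦ.of_le one_le_two) hgradΦ
  have hflux : ∫ x in Ioo 0 L ×ˢ Ioo (0 : ℝ) 1,
      div2 (energyFlux u_s κ (fun y => u y t) (fun y => pbar y t) (fun y => φ y t)) x = 0 := by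
    refine setIntegral_div2_eq_zero hG hL.le zero_le_one ?_ ?_ ?_ ?_
      <;> intro s hs <;> replace hs := Ioo_subset_Icc_self hs
    · exact dot_energyFlux_eq_zero (by simp [dot, hleft t ht s hs]) (hfluxleft t ht s hs)
    · exact dot_energyFlux_eq_zero (by simp [dot, hright t ht s hs]) (hfluxright t ht s hs)
    · exact dot_energyFlux_eq_zero_of_snd_eq_zero (by simp [dot, hbottom t ht s hs]) rfl
    · exact dot_energyFlux_eq_zero (by simp [dot, htop t ht s hs]) (hfluxtop t ht s hs)
  have hω₁ := (hω t ht).continuous_d1 one_ne_zero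
  have hω₂ := (hω t ht).continuous_d2 one_ne_zero
  have hdivG := hG.continuous_div2 one_ne_zero
  rw [setIntegral_congr_fun (measurableSet_Ioo.prod measurableSet_Ioo) fun x hx =>
      energy_density_eq (ω := fun y => ω y t) (hU.differentiable one_ne_zero x)
        ((hp t ht).differentiable one_ne_zero x) (hΦ.differentiable two_ne_zero x)
        (hgradΦ.differentiable one_ne_zero x) (hdiv t ht x hx) (hmom t ht x hx) (htransport t ht x hx),
    integral_add, hflux, add_zero, integral_add, integral_sub, integral_neg, integral_const_mul,
    integral_const_mul, integral_const_mul]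
  all_goals exact Continuous.integrableOn_Ioo_prod_Ioo (by fun_prop)

/-- Total energy budget of the turbidity current: combining the momentum and
particle transport equations with the boundary conditions gives
`d/dt(K + E_p) = −ε_v − ε_s`, i.e.
`∫_Ω [u·∂u/∂t + (∂φ/∂t) y] = −ν ∫_Ω (∇×ω)·u − u_s ∫_Ω φ + κ ∫_Ω ∇φ·e_g`. -/
theorem total_energy_budget
    (L T u_s ν κ : ℝ) (hL : 0 < L) (hν : 0 ≤ ν) (hκ : 0 < κ)
    (u : ℝ × ℝ → ℝ → ℝ × ℝ) (ω pbar φ : ℝ × ℝ → ℝ → ℝ)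
    (hu : ContDiff ℝ 1 (fun p : (ℝ × ℝ) × ℝ => u p.1 p.2))
    (hω : ∀ t ∈ Icc (0 : ℝ) T, ContDiff ℝ 1 (fun x => ω x t))
    (hp : ∀ t ∈ Icc (0 : ℝ) T, ContDiff ℝ 1 (fun x => pbar x t))
    (hφspace : ∀ t ∈ Icc (0 : ℝ) T, ContDiff ℝ 2 (fun x => φ x t))
    (hφtime : ContDiff ℝ 1 (fun p : (ℝ × ℝ) × ℝ => φ p.1 p.2))
    (hdiv : ∀ t ∈ Icc (0 : ℝ) T, ∀ x ∈ Ioo 0 L ×ˢ Ioo (0 : ℝ) 1, div2 (fun y => u y t) x = 0)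
    (hbottom : ∀ t ∈ Icc (0 : ℝ) T, ∀ x ∈ Icc 0 L, (u (x, 0) t).2 = 0)
    (htop : ∀ t ∈ Icc (0 : ℝ) T, ∀ x ∈ Icc 0 L, (u (x, 1) t).2 = 0)
    (hleft : ∀ t ∈ Icc (0 : ℝ) T, ∀ y ∈ Icc (0 : ℝ) 1, (u (0, y) t).1 = 0)
    (hright : ∀ t ∈ Icc (0 : ℝ) T, ∀ y ∈ Icc (0 : ℝ) 1, (u (L, y) t).1 = 0)
    (hmom : ∀ t ∈ Icc (0 : ℝ) T, ∀ x ∈ Ioo 0 L ×ˢ Ioo (0 : ℝ) 1,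
      deriv (fun s => u x s) t + (ω x t) • (-(u x t).2, (u x t).1)
          + grad (fun y => pbar y t) x
        = (-ν) • (d2 (fun y => ω y t) x, -(d1 (fun y => ω y t) x)) + (φ x t) • eg)
    (htransport : ∀ t ∈ Icc (0 : ℝ) T, ∀ x ∈ Ioo 0 L ×ˢ Ioo (0 : ℝ) 1,
      deriv (fun s => φ x s) t + dot (u x t + u_s • eg) (grad (fun y => φ y t) x)
        = κ * lap (fun y => φ y t) x)
    (hfluxtop : ∀ t ∈ Icc (0 : ℝ) T, ∀ x ∈ Icc 0 L,
      dot ((-(u_s * φ (x, 1) t)) • eg + κ • grad (fun y => φ y t) (x, 1)) ((0 : ℝ), 1) = 0)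
    (hfluxleft : ∀ t ∈ Icc (0 : ℝ) T, ∀ y ∈ Icc (0 : ℝ) 1,
      dot ((-(u_s * φ (0, y) t)) • eg + κ • grad (fun z => φ z t) (0, y)) ((-1 : ℝ), 0) = 0)
    (hfluxright : ∀ t ∈ Icc (0 : ℝ) T, ∀ y ∈ Icc (0 : ℝ) 1,
      dot ((-(u_s * φ (L, y) t)) • eg + κ • grad (fun z => φ z t) (L, y)) ((1 : ℝ), 0) = 0)
    (hfluxbottom : ∀ t ∈ Icc (0 : ℝ) T, ∀ x ∈ Icc 0 L,
      dot (grad (fun y => φ y t) (x, 0)) ((0 : ℝ), -1) = 0) :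
    ∀ t ∈ Icc (0 : ℝ) T,
      (∫ x in Ioo 0 L ×ˢ Ioo (0 : ℝ) 1,
          (dot (u x t) (deriv (fun s => u x s) t) + (deriv (fun s => φ x s) t) * x.2))
        = -(ν * ∫ x in Ioo 0 L ×ˢ Ioo (0 : ℝ) 1,
              dot (d2 (fun y => ω y t) x, -(d1 (fun y => ω y t) x)) (u x t))
          - u_s * (∫ x in Ioo 0 L ×ˢ Ioo (0 : ℝ) 1, φ x t)
          + κ * ∫ x in Ioo 0 L ×ˢ Ioo (0 : ℝ) 1, dot (grad (fun y => φ y t) x) eg :=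
  total_energy_budget_general L T u_s ν κ hL u ω pbar φ hu hω hp hφspace hdiv hbottom htop hleft
    hright hmom htransport hfluxtop hfluxleft hfluxright
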